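/- Let μ ∈ (0,1) and λ* ∈ (0,1), let (A,B) be controllable, let X ⊆ ℝⁿ and U ⊆ ℝᵐ be C-sets, let C be a λ*-contractive C-set, and set ε := (1−μ)/(2μ). Then there exist λ ∈ [λ*, 1) and k ∈ ℕ such that Q_k^λ(X) ⊆ (1+ε)·Q_k^λ(C) ⊆ (1+ε)·C_max^λ and 1 + μ ≤ 2λ^k. -/

import Mathlib

open Set Metric Pointwise

noncomputable section

abbrev Euc (n : ℕ) := EuclideanSpace ℝ (Fin n)

def IsCSet {n : ℕ} (C : Set (Euc n)) : Prop :=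
  Convex ℝ C ∧ IsCompact C ∧ (0 : Euc n) ∈ interior C

def rho {n : ℕ} (ξ : Euc n) (C : Set (Euc n)) : ℝ :=
  sSup {μ : ℝ | 0 < μ ∧ μ • ξ ∈ C}

def cdist {n : ℕ} (C D : Set (Euc n)) : ℝ :=
  ⨆ ξ : sphere (0 : Euc n) 1, |Real.log (rho ξ C) - Real.log (rho ξ D)|

def Q1 {n m : ℕ} (A : Matrix (Fin n) (Fin n) ℝ) (B : Matrix (Fin n) (Fin m) ℝ)
    (X : Set (Euc n)) (U : Set (Euc m)) (lam : ℝ) (D : Set (Euc n)) : Set (Euc n) :=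
  {x ∈ X | ∃ u ∈ U, WithLp.toLp 2 (A.mulVec x + B.mulVec u) ∈ lam • D}

def Qiter {n m : ℕ} (A : Matrix (Fin n) (Fin n) ℝ) (B : Matrix (Fin n) (Fin m) ℝ)
    (X : Set (Euc n)) (U : Set (Euc m)) (lam : ℝ) (D : Set (Euc n)) : ℕ → Set (Euc n)
  | 0 => D
  | k + 1 => Q1 A B X U lam (Qiter A B X U lam D k)

def IsContractive {n m : ℕ} (A : Matrix (Fin n) (Fin n) ℝ) (B : Matrix (Fin n) (Fin m) ℝ)
    (X : Set (Euc n)) (U : Set (Euc m)) (lam : ℝ) (C : Set (Euc n)) : Prop :=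
  C ⊆ X ∧ ∀ x ∈ C, ∃ u ∈ U, WithLp.toLp 2 (A.mulVec x + B.mulVec u) ∈ lam • C

def Cmax {n m : ℕ} (A : Matrix (Fin n) (Fin n) ℝ) (B : Matrix (Fin n) (Fin m) ℝ)
    (X : Set (Euc n)) (U : Set (Euc m)) (lam : ℝ) : Set (Euc n) :=
  ⋃₀ {C | IsContractive A B X U lam C}

def ctrb {n m : ℕ} (A : Matrix (Fin n) (Fin n) ℝ) (B : Matrix (Fin n) (Fin m) ℝ) :
    Matrix (Fin n) (Fin n × Fin m) ℝ :=
  Matrix.of fun i p => (A ^ (n - 1 - (p.1 : ℕ)) * B) i p.2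

def Controllable {n m : ℕ} (A : Matrix (Fin n) (Fin n) ℝ)
    (B : Matrix (Fin n) (Fin m) ℝ) : Prop :=
  (ctrb A B).rank = n

def enorm {ι : Type*} [Fintype ι] (v : ι → ℝ) : ℝ :=
  ‖(WithLp.equiv 2 (ι → ℝ)).symm v‖

def sigmaMax {n : ℕ} {ι : Type*} [Fintype ι] (Φ : Matrix (Fin n) ι ℝ) : ℝ :=
  ⨆ ξ : sphere (0 : EuclideanSpace ℝ ι) 1, enorm (Φ.mulVec ξ)

def sigmaMin {n : ℕ} {ι : Type*} [Fintype ι] (Φ : Matrix (Fin n) ι ℝ) : ℝ :=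
  ⨅ ξ : sphere (0 : Euc n) 1, enorm (Φ.transpose.mulVec ξ)

def alphaA {n : ℕ} (A : Matrix (Fin n) (Fin n) ℝ) : ℝ :=
  max 1 (⨆ j ∈ Finset.Icc 1 n, sigmaMax (A ^ j))

def rhoHat {n m : ℕ} (A : Matrix (Fin n) (Fin n) ℝ) (B : Matrix (Fin n) (Fin m) ℝ)
    (lam rx ru : ℝ) : ℝ :=
  lam ^ (n - 1) / alphaA A *
    min (rx / (1 + sigmaMax (ctrb A B) / sigmaMin (ctrb A B)))
        (ru * sigmaMin (ctrb A B))

end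

/-!
Write `Q^k_λ` for `Qiter A B X U λ · k`. Since `C ⊆ X` is a C-set and `X` is bounded,
`X ⊆ (1 + d₀) • C` for some `d₀`. The heart of the proof is a uniform contraction over blocks
of `n` steps: there is `q < 1` such that `Q^n_λ((1 + d) • D) ⊆ (1 + q d) • Q^n_λ(D)` for all
`D ⊆ X`, `d ≥ 0` and `λ ∈ [0, 1]`. To see it, take a trajectory from `x` ending at `(1 + d) y`
with `y ∈ D`, shrink it by `t = (1 + q d)⁻¹`, and add a correction trajectory from `0` to the
remaining gap `y - t (1 + d) y`. Controllability provides one of size proportional to the gap,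
uniformly in `λ ≤ 1` (rescale a `λ = 1` trajectory by powers of `λ`), and the inner balls of
`X` and `U` absorb it. Iterating over `j` blocks gives
`Q^{jn}_λ(X) ⊆ (1 + q^j d₀) • Q^{jn}_λ(C)`, and `q^j d₀ ≤ ε` for large `j`. Only then is `λ`
chosen, close enough to `1` that `λ^{jn} ≥ (1 + μ)/2`; the sets `Q^k_λ(C)` are `λ`-contractive,
hence lie in `C_max^λ`.
-/

open Matrix Filter Topology

section Pointwise

variable {𝕜 E : Type*}

theorem Convex.smul_set_subset_smul_set_of_le [Field 𝕜] [LinearOrder 𝕜] [IsStrictOrderedRing 𝕜]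
    [AddCommGroup E] [Module 𝕜 E] {s : Set E} (hs : Convex 𝕜 s) (hs0 : (0 : E) ∈ s) {a b : 𝕜}
    (ha : 0 ≤ a) (hab : a ≤ b) : a • s ⊆ b • s :=
  calc a • s ⊆ a • s + (b - a) • s := Set.subset_add_left _ (Set.zero_mem_smul_set hs0)
    _ = b • s := by rw [← hs.add_smul ha (sub_nonneg.2 hab), add_sub_cancel]

variable [NormedAddCommGroup E] [NormedSpace ℝ E]

theorem Convex.smul_add_mem_of_closedBall_subset {s : Set E} (hs : Convex ℝ s) {r : ℝ}
    (hr : 0 ≤ r) (hrs : closedBall 0 r ⊆ s) {x y : E} (hx : x ∈ s) {t : ℝ} (ht0 : 0 ≤ t)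
    (ht1 : t ≤ 1) (hy : ‖y‖ ≤ (1 - t) * r) : t • x + y ∈ s := by
  have hy' : y ∈ (1 - t) • s := by
    refine Set.smul_set_mono hrs ?_
    rw [smul_closedBall _ _ hr, smul_zero, Real.norm_of_nonneg (sub_nonneg.2 ht1)]
    simpa using hy
  have h := Set.add_mem_add (Set.smul_mem_smul_set (a := t) hx) hy'
  rwa [← hs.add_smul ht0 (sub_nonneg.2 ht1), add_sub_cancel, one_smul] at h

theorem closedBall_subset_div_smul {s : Set E} {r R : ℝ} (hr : 0 < r) (hR : 0 ≤ R)
    (hrs : closedBall 0 r ⊆ s) : closedBall (0 : E) R ⊆ (R / r) • s :=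
  calc closedBall (0 : E) R = (R / r) • closedBall 0 r := by
        rw [smul_closedBall _ _ hr.le, smul_zero, Real.norm_of_nonneg (by positivity),
          div_mul_cancel₀ _ hr.ne']
    _ ⊆ (R / r) • s := Set.smul_set_mono hrs

end Pointwise

theorem LinearMap.exists_bound_of_finset {E F ι : Type*} [NormedAddCommGroup E]
    [NormedSpace ℝ E] [FiniteDimensional ℝ E] [NormedAddCommGroup F] [NormedSpace ℝ F]
    (f : ι → E →ₗ[ℝ] F) (s : Finset ι) : ∃ c, 0 ≤ c ∧ ∀ i ∈ s, ∀ x, ‖f i x‖ ≤ c * ‖x‖ := by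
  refine ⟨∑ i ∈ s, ‖LinearMap.toContinuousLinearMap (f i)‖, by positivity, fun i hi x => ?_⟩
  calc ‖f i x‖ = ‖LinearMap.toContinuousLinearMap (f i) x‖ := rfl
    _ ≤ ‖LinearMap.toContinuousLinearMap (f i)‖ * ‖x‖ := ContinuousLinearMap.le_opNorm _ _
    _ ≤ _ := by
      gcongr
      exact Finset.single_le_sum (f := fun j => ‖LinearMap.toContinuousLinearMap (f j)‖)
        (fun j _ => norm_nonneg _) hi

theorem Module.End.sum_range_succ_pow_apply {R M N : Type*} [Semiring R] [AddCommMonoid M]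
    [Module R M] [AddCommMonoid N] [Module R N] (a : Module.End R M) (b : N →ₗ[R] M)
    (v : ℕ → N) (j : ℕ) :
    ∑ i ∈ Finset.range (j + 1), (a ^ (j - i)) (b (v i))
      = a (∑ i ∈ Finset.range j, (a ^ (j - 1 - i)) (b (v i))) + b (v j) := by
  rw [Finset.sum_range_succ, Nat.sub_self, pow_zero, Module.End.one_apply, map_sum]
  congr 1
  refine Finset.sum_congr rfl fun i hi => ?_
  rw [show j - i = j - 1 - i + 1 by have := Finset.mem_range.1 hi; omega, pow_succ',
    Module.End.mul_apply]

theorem exists_mem_Ico_le_pow {a b : ℝ} (ha : a < 1) (hb : b < 1) (k : ℕ) :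
    ∃ l ∈ Ico a 1, b ≤ l ^ k := by
  have hpow : Tendsto (fun l : ℝ => l ^ k) (𝓝[<] 1) (𝓝 1) := by
    simpa using ((continuous_pow k).tendsto (1 : ℝ)).mono_left nhdsWithin_le_nhds
  have hgt : ∀ᶠ l in 𝓝[<] (1 : ℝ), a < l := (eventually_gt_nhds ha).filter_mono nhdsWithin_le_nhds
  obtain ⟨l, hal, hbl, hl1⟩ :=
    (hgt.and ((hpow.eventually (eventually_gt_nhds hb)).and self_mem_nhdsWithin)).exists
  exact ⟨l, ⟨hal.le, hl1⟩, hbl.le⟩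

variable {n m : ℕ} {A : Matrix (Fin n) (Fin n) ℝ} {B : Matrix (Fin n) (Fin m) ℝ}
  {X : Set (Euc n)} {U : Set (Euc m)} {l : ℝ}

noncomputable def dyn (A : Matrix (Fin n) (Fin n) ℝ) (B : Matrix (Fin n) (Fin m) ℝ) :
    Euc n × Euc m →ₗ[ℝ] Euc n :=
  (toEuclideanLin A).coprod (toEuclideanLin B)

theorem dyn_apply (x : Euc n) (u : Euc m) :
    dyn A B (x, u) = toEuclideanLin A x + toEuclideanLin B u :=
  rfl

section Qiter

theorem Q1_mono {D D' : Set (Euc n)} (h : D ⊆ D') : Q1 A B X U l D ⊆ Q1 A B X U l D' :=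
  fun _ ⟨hx, u, hu, hmem⟩ => ⟨hx, u, hu, Set.smul_set_mono h hmem⟩

theorem Qiter_mono {D D' : Set (Euc n)} (h : D ⊆ D') :
    ∀ k, Qiter A B X U l D k ⊆ Qiter A B X U l D' k
  | 0 => h
  | k + 1 => Q1_mono (Qiter_mono h k)

theorem Qiter_add (D : Set (Euc n)) (a b : ℕ) :
    Qiter A B X U l D (a + b) = Qiter A B X U l (Qiter A B X U l D b) a := by
  induction a with
  | zero => simp [Qiter]
  | succ a ih => rw [Nat.succ_add, Qiter, Qiter, ih]

theorem Qiter_subset {D : Set (Euc n)} (hD : D ⊆ X) : ∀ k, Qiter A B X U l D k ⊆ X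
  | 0 => hD
  | _ + 1 => fun _ hx => hx.1

theorem Q1_convex (hX : Convex ℝ X) (hU : Convex ℝ U) {D : Set (Euc n)} (hD : Convex ℝ D) :
    Convex ℝ (Q1 A B X U l D) := by
  rintro x₁ ⟨hx₁, u₁, hu₁, h₁⟩ x₂ ⟨hx₂, u₂, hu₂, h₂⟩ a b ha hb hab
  refine ⟨hX hx₁ hx₂ ha hb hab, a • u₁ + b • u₂, hU hu₁ hu₂ ha hb hab, ?_⟩
  have hlin : dyn A B (a • x₁ + b • x₂, a • u₁ + b • u₂)
      = a • dyn A B (x₁, u₁) + b • dyn A B (x₂, u₂) := by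
    rw [← map_smul, ← map_smul, ← map_add]; rfl
  change dyn A B (a • x₁ + b • x₂, a • u₁ + b • u₂) ∈ l • D
  rw [hlin]
  exact (hD.smul l) h₁ h₂ ha hb hab

theorem Qiter_convex (hX : Convex ℝ X) (hU : Convex ℝ U) {D : Set (Euc n)} (hD : Convex ℝ D) :
    ∀ k, Convex ℝ (Qiter A B X U l D k)
  | 0 => hD
  | k + 1 => Q1_convex hX hU (Qiter_convex hX hU hD k)

theorem mem_Qiter_iff {D : Set (Euc n)} {k : ℕ} {x : Euc n} :
    x ∈ Qiter A B X U l D k ↔ ∃ z : ℕ → Euc n, ∃ u : ℕ → Euc m, z 0 = x ∧ z k ∈ D ∧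
      ∀ i < k, z i ∈ X ∧ u i ∈ U ∧ l • z (i + 1) = dyn A B (z i, u i) := by
  induction k generalizing x with
  | zero =>
    exact ⟨fun h => ⟨fun _ => x, fun _ => 0, rfl, h, by simp⟩,
      by rintro ⟨z, u, rfl, hz, -⟩; exact hz⟩
  | succ k ih =>
    constructor
    · rintro ⟨hx, u₀, hu₀, y, hy, hxy⟩
      obtain ⟨z, u, rfl, hzk, hz⟩ := ih.1 hy
      refine ⟨fun i => Nat.casesOn i x z, fun i => Nat.casesOn i u₀ u, rfl, hzk, ?_⟩
      rintro (_ | i) hi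
      · exact ⟨hx, hu₀, hxy⟩
      · exact hz i (by omega)
    · rintro ⟨z, u, rfl, hzk, hz⟩
      obtain ⟨hz₀, hu₀, hdyn⟩ := hz 0 k.succ_pos
      exact ⟨hz₀, u 0, hu₀, z 1,
        ih.2 ⟨fun i => z (i + 1), fun i => u (i + 1), rfl, hzk, fun i hi => hz (i + 1) (by omega)⟩,
        hdyn⟩

end Qiter

section Contractive

variable {C : Set (Euc n)}

theorem IsContractive.of_le (hC : IsContractive A B X U l C) (hconv : Convex ℝ C)
    (h0 : (0 : Euc n) ∈ C) {l' : ℝ} (hl : 0 ≤ l) (hll' : l ≤ l') :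
    IsContractive A B X U l' C := by
  refine ⟨hC.1, fun x hx => ?_⟩
  obtain ⟨u, hu, hmem⟩ := hC.2 x hx
  exact ⟨u, hu, hconv.smul_set_subset_smul_set_of_le h0 hl hll' hmem⟩

theorem IsContractive.subset_Q1 (hC : IsContractive A B X U l C) : C ⊆ Q1 A B X U l C :=
  fun x hx => ⟨hC.1 hx, hC.2 x hx⟩

theorem IsContractive.isContractive_Q1 (hC : IsContractive A B X U l C) :
    IsContractive A B X U l (Q1 A B X U l C) :=
  ⟨fun _ hx => hx.1, fun _ ⟨_, u, hu, hmem⟩ => ⟨u, hu, Set.smul_set_mono hC.subset_Q1 hmem⟩⟩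

theorem IsContractive.isContractive_Qiter (hC : IsContractive A B X U l C) :
    ∀ k, IsContractive A B X U l (Qiter A B X U l C k)
  | 0 => hC
  | k + 1 => (hC.isContractive_Qiter k).isContractive_Q1

theorem IsContractive.subset_Qiter (hC : IsContractive A B X U l C) :
    ∀ k, C ⊆ Qiter A B X U l C k
  | 0 => subset_rfl
  | k + 1 => hC.subset_Q1.trans (Q1_mono (hC.subset_Qiter k))

theorem IsContractive.Qiter_subset_Cmax (hC : IsContractive A B X U l C) (k : ℕ) :
    Qiter A B X U l C k ⊆ Cmax A B X U l :=
  Set.subset_sUnion_of_mem (hC.isContractive_Qiter k)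

end Contractive

section Steering

/-- The state reached from `0` in `n` steps under the inputs `v 0, …, v (n - 1)`. -/
noncomputable def reachMap (A : Matrix (Fin n) (Fin n) ℝ) (B : Matrix (Fin n) (Fin m) ℝ) :
    (Fin n → Euc m) →ₗ[ℝ] Euc n :=
  ∑ i : Fin n, (toEuclideanLin A ^ (n - 1 - (i : ℕ))) ∘ₗ toEuclideanLin B ∘ₗ LinearMap.proj i

theorem ctrb_mulVec (p : Fin n × Fin m → ℝ) :
    ctrb A B *ᵥ p = ∑ i : Fin n, (A ^ (n - 1 - (i : ℕ)) * B) *ᵥ fun j => p (i, j) := by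
  funext k
  simp only [mulVec, dotProduct, ctrb, of_apply, Fintype.sum_prod_type, Finset.sum_apply]

theorem Controllable.surjective_reachMap (hAB : Controllable A B) :
    Function.Surjective (reachMap A B) := by
  intro w
  have hrange : LinearMap.range (ctrb A B).mulVecLin = ⊤ := by
    apply Submodule.eq_top_of_finrank_eq
    rw [Module.finrank_fintype_fun_eq_card, Fintype.card_fin]
    exact hAB
  obtain ⟨p, hp⟩ : ∃ p, ctrb A B *ᵥ p = WithLp.ofLp w := by
    simpa using (LinearMap.range_eq_top.1 hrange) (WithLp.ofLp w)
  refine ⟨fun i => WithLp.toLp 2 fun j => p (i, j), WithLp.ofLp_injective 2 ?_⟩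
  rw [← hp, ctrb_mulVec]
  simp only [reachMap, LinearMap.sum_apply, WithLp.ofLp_sum]
  refine Finset.sum_congr rfl fun i _ => ?_
  simp only [LinearMap.comp_apply, LinearMap.proj_apply]
  rw [← toLpLin_pow, toLpLin_apply, toLpLin_apply, WithLp.ofLp_toLp, WithLp.ofLp_toLp,
    mulVec_mulVec]

def HasSteeringBound (A : Matrix (Fin n) (Fin n) ℝ) (B : Matrix (Fin n) (Fin m) ℝ) (l c : ℝ) :
    Prop :=
  ∀ w : Euc n, ∃ v : ℕ → Euc m, ∃ s : ℕ → Euc n, s 0 = 0 ∧ s n = w ∧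
    (∀ i < n, l • s (i + 1) = dyn A B (s i, v i)) ∧ ∀ i ≤ n, ‖v i‖ ≤ c * ‖w‖ ∧ ‖s i‖ ≤ c * ‖w‖

theorem Controllable.exists_hasSteeringBound (hAB : Controllable A B) :
    ∃ c, 0 ≤ c ∧ HasSteeringBound A B 1 c := by
  obtain ⟨ρ, hρ⟩ := (reachMap A B).exists_rightInverse_of_surjective
    (LinearMap.range_eq_top.2 hAB.surjective_reachMap)
  -- the trajectory depends linearly on `w`, which bounds it by a multiple of `‖w‖`
  let V : ℕ → Euc n →ₗ[ℝ] Euc m := fun i => if h : i < n then LinearMap.proj ⟨i, h⟩ ∘ₗ ρ else 0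
  let S : ℕ → Euc n →ₗ[ℝ] Euc n := fun j =>
    ∑ i ∈ Finset.range j, (toEuclideanLin A ^ (j - 1 - i)) ∘ₗ toEuclideanLin B ∘ₗ V i
  obtain ⟨c, hc, hbound⟩ :=
    LinearMap.exists_bound_of_finset (fun i => (V i).prod (S i)) (Finset.range (n + 1))
  refine ⟨c, hc, fun w => ⟨fun i => V i w, fun j => S j w, by simp [S], ?_, fun i _ => ?_,
    fun i hi => ?_⟩⟩
  · have hV : ∀ i : Fin n, V i w = ρ w i := fun i => by simp [V]
    calc S n w = reachMap A B (ρ w) := by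
          simp [S, reachMap, ← Fin.sum_univ_eq_sum_range, hV]
      _ = w := LinearMap.congr_fun hρ w
  · rw [one_smul, dyn_apply]
    simpa [S] using Module.End.sum_range_succ_pow_apply (toEuclideanLin A) (toEuclideanLin B)
      (fun i => V i w) i
  · have h : ‖(V i w, S i w)‖ ≤ c * ‖w‖ :=
      hbound i (Finset.mem_range.2 (Nat.lt_succ_of_le hi)) w
    exact ⟨(norm_fst_le _).trans h, (norm_snd_le _).trans h⟩

theorem HasSteeringBound.of_one {c : ℝ} (h : HasSteeringBound A B 1 c) (hl0 : 0 ≤ l)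
    (hl1 : l ≤ 1) : HasSteeringBound A B l c := by
  intro w
  obtain ⟨v, s, hs0, hsn, hdyn, hbound⟩ := h w
  have hpow : ∀ i, ‖l ^ (n - i)‖ ≤ 1 := fun i => by
    rw [norm_pow, Real.norm_of_nonneg hl0]
    exact pow_le_one₀ hl0 hl1
  refine ⟨fun i => l ^ (n - i) • v i, fun i => l ^ (n - i) • s i, by simp [hs0], by simp [hsn],
    fun i hi => ?_, fun i hi => ⟨?_, ?_⟩⟩
  · have hstep := hdyn i hi
    rw [one_smul] at hstep
    rw [smul_smul, ← pow_succ', show n - (i + 1) + 1 = n - i by omega, hstep, ← map_smul (dyn A B)]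
    rfl
  · rw [norm_smul]
    exact (mul_le_of_le_one_left (norm_nonneg _) (hpow i)).trans (hbound i hi).1
  · rw [norm_smul]
    exact (mul_le_of_le_one_left (norm_nonneg _) (hpow i)).trans (hbound i hi).2

end Steering

section BlockContraction

variable {r R c q : ℝ}

theorem Qiter_smul_subset (hXc : Convex ℝ X) (hUc : Convex ℝ U) (hr : 0 ≤ r)
    (hrX : closedBall 0 r ⊆ X) (hrU : closedBall 0 r ⊆ U) (hXR : X ⊆ closedBall 0 R)
    (hsteer : HasSteeringBound A B l c) (hc : 0 ≤ c) (hq0 : 0 ≤ q) (hq1 : q ≤ 1)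
    (hq : c * R * (1 - q) ≤ q * r) {D : Set (Euc n)} (hDX : D ⊆ X) {d : ℝ} (hd : 0 ≤ d) :
    Qiter A B X U l ((1 + d) • D) n ⊆ (1 + q * d) • Qiter A B X U l D n := by
  intro x hx
  obtain ⟨z, u, rfl, ⟨y, hyD, hzy : (1 + d) • y = z n⟩, hz⟩ := mem_Qiter_iff.1 hx
  set t := (1 + q * d)⁻¹
  have htq : t * (1 + q * d) = 1 := inv_mul_cancel₀ (by positivity)
  have ht0 : 0 ≤ t := by positivity
  have ht1 : t ≤ 1 := inv_le_one_of_one_le₀ (by nlinarith)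
  -- the steering closes the gap between `y` and the endpoint of the shrunk trajectory
  set w := y - t • z n
  have hw : w = -(t * d * (1 - q)) • y := by
    have hcoef : -(t * d * (1 - q)) = 1 - t * (1 + d) := by linear_combination htq
    rw [hcoef, sub_smul, one_smul, ← smul_smul, hzy]
  have hyR : ‖y‖ ≤ R := by simpa using hXR (hDX hyD)
  have hcw : c * ‖w‖ ≤ (1 - t) * r :=
    calc c * ‖w‖ = t * d * (c * (1 - q) * ‖y‖) := by
          rw [hw, norm_smul, norm_neg, Real.norm_of_nonneg (mul_nonneg (mul_nonneg ht0 hd) (sub_nonneg.2 hq1))]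
          ring
      _ ≤ t * d * (c * (1 - q) * R) := by gcongr
      _ ≤ t * d * (q * r) := mul_le_mul_of_nonneg_left (by linarith) (mul_nonneg ht0 hd)
      _ = (1 - t) * r := by linear_combination r * htq
  obtain ⟨v, s, hs0, hsn, hsdyn, hsv⟩ := hsteer w
  refine ⟨t • z 0, mem_Qiter_iff.2 ⟨fun i => t • z i + s i, fun i => t • u i + v i,
    by simp [hs0], by simpa [hsn, w] using hyD, fun i hi => ⟨?_, ?_, ?_⟩⟩,
    smul_inv_smul₀ (by positivity) _⟩
  · exact hXc.smul_add_mem_of_closedBall_subset hr hrX (hz i hi).1 ht0 ht1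
      (((hsv i hi.le).2).trans hcw)
  · exact hUc.smul_add_mem_of_closedBall_subset hr hrU (hz i hi).2.1 ht0 ht1
      (((hsv i hi.le).1).trans hcw)
  · rw [smul_add, smul_comm l t, (hz i hi).2.2, hsdyn i hi, ← map_smul, ← map_add]
    rfl

theorem exists_Qiter_smul_subset (hAB : Controllable A B) (hXc : Convex ℝ X) (hUc : Convex ℝ U)
    (hr : 0 < r) (hR : 0 ≤ R) (hrX : closedBall 0 r ⊆ X) (hrU : closedBall 0 r ⊆ U)
    (hXR : X ⊆ closedBall 0 R) :
    ∃ q : ℝ, 0 ≤ q ∧ q < 1 ∧ ∀ l, 0 ≤ l → l ≤ 1 → ∀ D ⊆ X, ∀ d, 0 ≤ d →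
      Qiter A B X U l ((1 + d) • D) n ⊆ (1 + q * d) • Qiter A B X U l D n := by
  obtain ⟨c, hc, hsteer⟩ := hAB.exists_hasSteeringBound
  have hcR : 0 ≤ c * R := mul_nonneg hc hR
  have hq1 : c * R / (c * R + r) < 1 := (div_lt_one (by positivity)).2 (by linarith)
  refine ⟨c * R / (c * R + r), by positivity, hq1, fun l hl0 hl1 D hDX d hd =>
    Qiter_smul_subset hXc hUc hr.le hrX hrU hXR (hsteer.of_one hl0 hl1) hc (by positivity)
      hq1.le ?_ hDX hd⟩
  refine le_of_eq ?_
  field_simp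
  ring

theorem Qiter_mul_subset {N : ℕ} {C : Set (Euc n)} {d₀ : ℝ} (hCX : C ⊆ X) (hq : 0 ≤ q)
    (hd₀ : 0 ≤ d₀)
    (hblock : ∀ D ⊆ X, ∀ d, 0 ≤ d →
      Qiter A B X U l ((1 + d) • D) N ⊆ (1 + q * d) • Qiter A B X U l D N)
    (hbase : X ⊆ (1 + d₀) • C) :
    ∀ i : ℕ, Qiter A B X U l X (i * N) ⊆ (1 + q ^ i * d₀) • Qiter A B X U l C (i * N)
  | 0 => by simpa [Qiter] using hbase
  | i + 1 => by
    rw [add_mul, one_mul, add_comm, Qiter_add, Qiter_add]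
    calc Qiter A B X U l (Qiter A B X U l X (i * N)) N
        ⊆ Qiter A B X U l ((1 + q ^ i * d₀) • Qiter A B X U l C (i * N)) N :=
          Qiter_mono (Qiter_mul_subset hCX hq hd₀ hblock hbase i) N
      _ ⊆ (1 + q * (q ^ i * d₀)) • Qiter A B X U l (Qiter A B X U l C (i * N)) N :=
          hblock _ (Qiter_subset hCX _) _ (by positivity)
      _ = (1 + q ^ (i + 1) * d₀) • Qiter A B X U l (Qiter A B X U l C (i * N)) N := by
          rw [pow_succ']; ring_nf

end BlockContraction

theorem stmt15 {n m : ℕ} (μ lamStar : ℝ)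
    (hμ : μ ∈ Set.Ioo (0 : ℝ) 1) (hlamStar : lamStar ∈ Set.Ioo (0 : ℝ) 1)
    (A : Matrix (Fin n) (Fin n) ℝ) (B : Matrix (Fin n) (Fin m) ℝ)
    (hAB : Controllable A B)
    (X : Set (Euc n)) (U : Set (Euc m)) (hX : IsCSet X) (hU : IsCSet U)
    (C : Set (Euc n)) (hC : IsCSet C) (hCcontr : IsContractive A B X U lamStar C) :
    ∃ lam ∈ Set.Ico lamStar 1, ∃ k : ℕ,
      Qiter A B X U lam X k ⊆ (1 + (1 - μ) / (2 * μ)) • Qiter A B X U lam C k ∧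
      (1 + (1 - μ) / (2 * μ)) • Qiter A B X U lam C k
        ⊆ (1 + (1 - μ) / (2 * μ)) • Cmax A B X U lam ∧
      1 + μ ≤ 2 * lam ^ k := by
  obtain ⟨hμ0, hμ1⟩ := hμ
  obtain ⟨hlam0, hlam1⟩ := hlamStar
  have hε : 0 < (1 - μ) / (2 * μ) := div_pos (by linarith) (by linarith)
  obtain ⟨rC, hrC, hrCC⟩ := nhds_basis_closedBall.mem_iff.1 (mem_interior_iff_mem_nhds.1 hC.2.2)
  obtain ⟨rU, hrU, hrUU⟩ := nhds_basis_closedBall.mem_iff.1 (mem_interior_iff_mem_nhds.1 hU.2.2)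
  have hr : 0 < min rC rU := lt_min hrC hrU
  have hrC' := (closedBall_subset_closedBall (min_le_left rC rU)).trans hrCC
  have hrU' := (closedBall_subset_closedBall (min_le_right rC rU)).trans hrUU
  have h0C : (0 : Euc n) ∈ C := hrC' (mem_closedBall_self hr.le)
  obtain ⟨R, hXR⟩ := hX.2.1.isBounded.subset_closedBall (0 : Euc n)
  have hR : 0 ≤ R := by simpa using hXR (hCcontr.1 h0C)
  obtain ⟨q, hq0, hq1, hblock⟩ :=
    exists_Qiter_smul_subset hAB hX.1 hU.1 hr hR (hrC'.trans hCcontr.1) hrU' hXR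
  obtain ⟨j, hj⟩ := (((tendsto_pow_atTop_nhds_zero_of_lt_one hq0 hq1).mul_const
    (R / min rC rU)).eventually (gt_mem_nhds (by simpa using hε))).exists
  obtain ⟨l, ⟨hl, hl1⟩, hlk⟩ := exists_mem_Ico_le_pow hlam1 (by linarith : (1 + μ) / 2 < 1) (j * n)
  have hCl := hCcontr.of_le hC.1 h0C hlam0.le hl
  have hbase : X ⊆ (1 + R / min rC rU) • C := hXR.trans ((closedBall_subset_div_smul hr hR hrC').trans
    (hC.1.smul_set_subset_smul_set_of_le h0C (by positivity) (by linarith)))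
  refine ⟨l, ⟨hl, hl1⟩, j * n, ?_, Set.smul_set_mono (hCl.Qiter_subset_Cmax _), by linarith⟩
  exact (Qiter_mul_subset hCcontr.1 hq0 (by positivity) (hblock l (hlam0.le.trans hl) hl1.le)
    hbase j).trans ((Qiter_convex hX.1 hU.1 hC.1 _).smul_set_subset_smul_set_of_le
      (hCl.subset_Qiter _ h0C) (by positivity) (by linarith))
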